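/- arXiv:1911.11001 — 6 statements merged into one kernel-verified Lean document; each statement's English description precedes it below -/
import Mathlib

section
/- For every nonnegative integer n and 0<β<1, the squared L²-norm of z^n against the weight e^{-2φ(z)} with φ(z)=(log⁺|z|)^{β+1}, i.e. ∫_ℂ |z|^{2n} e^{-2(log⁺|z|)^{β+1}} dm(z), is comparable (up to absolute multiplicative constants depending only on β) to ((1+n)/(1+β))^{(1-β)/(2β)} · exp(2β((1+n)/(1+β))^{(1+β)/β}). -/
open MeasureTheory

noncomputable def phi (β : ℝ) (z : ℂ) : ℝ := (max (Real.log ‖z‖) 0) ^ (β + 1)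

noncomputable def mom (β : ℝ) (n : ℕ) : ℝ :=
  ∫ z : ℂ, ‖z‖ ^ (2 * n) * Real.exp (-2 * phi β z)

/-!
In polar coordinates and after the substitution `r = exp (τ s)`, where `(β + 1) τ ^ β = n + 1`
puts the maximum of the exponent at `s = 1`, the part `|z| > 1` of `mom β n` becomes
`2π τ e^{β t} ∫_0^∞ e^{-t D(s)} ds` with `t = 2 τ ^ (β + 1)` and
`D(s) = s ^ (β + 1) - 1 - (β + 1) (s - 1)`, the gap between `s ^ (β + 1)` and its tangent at `1`.
This Laplace integral is `≍ t^{-1/2}`: on `[1, 1 + ε]`, `ε = t^{-1/2}`, the concavity of `s ^ β`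
gives `D(s) ≤ (β + 1) β (s - 1)²`, and outside `[1 - ε, 1 + ε]` the tangent lines of the convex
`D` at `1 ± ε` have slopes of size `ε`, so `e^{-t D}` is dominated by a two-sided exponential
of width `ε`. Finally `τ t^{-1/2} e^{β t}` is `2^{-1/2}` times the claimed expression, and the part
`|z| ≤ 1` contributes `π / (n + 1)`, which is absorbed because the claimed expression is bounded
below.
-/

open Real Set

theorem rpow_add_mul_rpow_sub_one_mul_sub_le {p x y : ℝ} (hp : 1 ≤ p) (hx : 0 ≤ x)
    (hy : 0 < y) : y ^ p + p * y ^ (p - 1) * (x - y) ≤ x ^ p := by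
  have h := one_add_mul_self_le_rpow_one_add (s := x / y - 1)
    (by linarith [div_nonneg hx hy.le]) hp
  rw [add_sub_cancel, div_rpow hx hy.le, le_div_iff₀ (by positivity)] at h
  calc y ^ p + p * y ^ (p - 1) * (x - y) = (1 + p * (x / y - 1)) * y ^ p := by
        rw [rpow_sub_one hy.ne']; field_simp
    _ ≤ x ^ p := h

theorem rpow_le_rpow_add_mul_rpow_sub_one_mul_sub {p x y : ℝ} (hp0 : 0 ≤ p) (hp1 : p ≤ 1)
    (hx : 0 ≤ x) (hy : 0 < y) : x ^ p ≤ y ^ p + p * y ^ (p - 1) * (x - y) := by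
  have h := rpow_one_add_le_one_add_mul_self (s := x / y - 1)
    (by linarith [div_nonneg hx hy.le]) hp0 hp1
  rw [add_sub_cancel, div_rpow hx hy.le, div_le_iff₀ (by positivity)] at h
  calc x ^ p ≤ (1 + p * (x / y - 1)) * y ^ p := h
    _ = y ^ p + p * y ^ (p - 1) * (x - y) := by rw [rpow_sub_one hy.ne']; field_simp

noncomputable def tangentGap (β s : ℝ) : ℝ := s ^ (β + 1) - 1 - (β + 1) * (s - 1)

section tangentGap

variable {β s : ℝ}

theorem continuous_tangentGap (hβ : 0 ≤ β) : Continuous (tangentGap β) := by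
  have : Continuous fun s : ℝ ↦ s ^ (β + 1) := continuous_rpow_const (by linarith)
  unfold tangentGap
  fun_prop

theorem mul_sub_le_tangentGap_sub_tangentGap (hβ : 0 ≤ β) {x : ℝ} (hx : 0 < x) (hs : 0 ≤ s) :
    (β + 1) * (x ^ β - 1) * (s - x) ≤ tangentGap β s - tangentGap β x := by
  have h := rpow_add_mul_rpow_sub_one_mul_sub_le (p := β + 1) (by linarith) hs hx
  rw [add_sub_cancel_right] at h
  unfold tangentGap
  linarith

theorem tangentGap_nonneg (hβ : 0 ≤ β) (hs : 0 ≤ s) : 0 ≤ tangentGap β s := by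
  simpa [tangentGap] using mul_sub_le_tangentGap_sub_tangentGap hβ one_pos hs

theorem tangentGap_le_sq (hβ0 : 0 ≤ β) (hβ1 : β ≤ 1) (hs : 1 ≤ s) :
    tangentGap β s ≤ (β + 1) * β * (s - 1) ^ 2 := by
  have hs0 : 0 < s := by linarith
  have htangent := mul_sub_le_tangentGap_sub_tangentGap hβ0 hs0 zero_le_one
  have hconcave := rpow_le_rpow_add_mul_rpow_sub_one_mul_sub hβ0 hβ1 hs0.le one_pos
  rw [show tangentGap β 1 = 0 by simp [tangentGap]] at htangent
  rw [one_rpow, one_rpow, mul_one] at hconcave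
  nlinarith [mul_le_mul_of_nonneg_left hconcave (by nlinarith : 0 ≤ (β + 1) * (s - 1))]

theorem mul_abs_sub_one_sub_le_tangentGap (hβ0 : 0 < β) (hβ1 : β ≤ 1) {ε m : ℝ} (hε : 0 < ε)
    (hm0 : 0 ≤ m) (hm : m ≤ (β + 1) * β * (1 + ε) ^ (β - 1)) (hs : 0 ≤ s) :
    m * ε * (|s - 1| - ε) ≤ tangentGap β s := by
  rcases le_or_gt |s - 1| ε with hnear | hfar
  · nlinarith [tangentGap_nonneg hβ0.le hs, mul_nonneg hm0 hε.le]
  have hM : m * ε * (|s - 1| - ε) ≤ (β + 1) * β * (1 + ε) ^ (β - 1) * ε * (|s - 1| - ε) := by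
    gcongr
  refine hM.trans ?_
  -- Use the tangent line of `tangentGap β` at `1 ± ε`; by concavity of `x ^ β` its slope
  -- `(β + 1) ((1 ± ε) ^ β - 1)` is at least `(β + 1) β (1 + ε) ^ (β - 1) ε` in absolute value.
  rcases le_or_gt 1 s with hright | hleft
  · rw [abs_of_nonneg (by linarith)] at hfar ⊢
    have hslope := rpow_le_rpow_add_mul_rpow_sub_one_mul_sub hβ0.le hβ1 zero_le_one
      (by linarith : (0 : ℝ) < 1 + ε)
    have htangent := mul_sub_le_tangentGap_sub_tangentGap hβ0.le (by linarith : (0 : ℝ) < 1 + ε) hs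
    have := tangentGap_nonneg hβ0.le (by linarith : (0 : ℝ) ≤ 1 + ε)
    rw [one_rpow] at hslope
    nlinarith [mul_le_mul_of_nonneg_left hslope (by nlinarith : 0 ≤ (β + 1) * (s - 1 - ε))]
  · rw [abs_of_neg (by linarith)] at hfar ⊢
    have hslope := rpow_le_rpow_add_mul_rpow_sub_one_mul_sub hβ0.le hβ1
      (by linarith : (0 : ℝ) ≤ 1 - ε) one_pos
    have htangent := mul_sub_le_tangentGap_sub_tangentGap hβ0.le (by linarith : (0 : ℝ) < 1 - ε) hs
    have := tangentGap_nonneg hβ0.le (by linarith : (0 : ℝ) ≤ 1 - ε)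
    have hdecay : (1 + ε) ^ (β - 1) ≤ 1 :=
      rpow_le_one_of_one_le_of_nonpos (by linarith) (by linarith)
    rw [one_rpow, one_rpow, mul_one] at hslope
    nlinarith [mul_le_mul_of_nonneg_left hslope (by nlinarith : 0 ≤ (β + 1) * (1 - ε - s)),
      mul_le_mul_of_nonneg_left hdecay
        (mul_nonneg (by positivity) (by linarith) : 0 ≤ (β + 1) * β * ε * (-(s - 1) - ε))]

end tangentGap

theorem integrable_exp_neg_mul_abs {k : ℝ} (hk : 0 < k) :
    Integrable fun x : ℝ ↦ exp (-k * |x|) := by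
  have hIoi : IntegrableOn (fun x : ℝ ↦ exp (-k * |x|)) (Ioi 0) :=
    (exp_neg_integrableOn_Ioi 0 hk).congr_fun (fun x hx ↦ by rw [abs_of_pos hx]) measurableSet_Ioi
  have hIci : IntegrableOn (fun x : ℝ ↦ exp (-k * |x|)) (Ici (-0)) := by
    rw [neg_zero]
    exact (integrableOn_Ici_iff_integrableOn_Ioi enorm_ne_top).mpr hIoi
  have hIic : IntegrableOn (fun x : ℝ ↦ exp (-k * |x|)) (Iic 0) := by
    simpa only [abs_neg] using hIci.comp_neg_Iic
  rw [← integrableOn_univ, ← Iic_union_Ioi (a := (0 : ℝ))]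
  exact hIic.union hIoi

theorem integral_exp_neg_mul_abs {k : ℝ} (hk : 0 < k) :
    ∫ x : ℝ, exp (-k * |x|) = 2 / k := by
  rw [integral_comp_abs (f := fun x ↦ exp (-k * x)), integral_exp_mul_Ioi (by linarith)]
  field_simp
  simp

noncomputable def laplaceIntegral (β t : ℝ) : ℝ := ∫ s in Ioi 0, exp (-(t * tangentGap β s))

section laplaceIntegral

variable {β t : ℝ}

theorem exp_neg_mul_tangentGap_le (hβ0 : 0 < β) (hβ1 : β ≤ 1) (ht : 0 < t) {m s : ℝ}
    (hm0 : 0 ≤ m) (hm : m ≤ (β + 1) * β * (1 + (√t)⁻¹) ^ (β - 1)) (hs : 0 ≤ s) :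
    exp (-(t * tangentGap β s)) ≤ exp m * exp (-(m * √t) * |s - 1|) := by
  have hV := mul_abs_sub_one_sub_le_tangentGap hβ0 hβ1 (by positivity) hm0 hm hs
  have hscaled := mul_le_mul_of_nonneg_left hV ht.le
  field_simp at hscaled
  rw [sq_sqrt ht.le] at hscaled
  rw [← exp_add, exp_le_exp]
  linarith

theorem integrableOn_exp_neg_mul_tangentGap (hβ0 : 0 < β) (hβ1 : β ≤ 1) (ht : 0 < t) :
    IntegrableOn (fun s ↦ exp (-(t * tangentGap β s))) (Ioi 0) := by
  set m := (β + 1) * β * (1 + (√t)⁻¹) ^ (β - 1)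
  have hm : 0 < m := by positivity
  have hmajorant :=
    ((integrable_exp_neg_mul_abs (by positivity : 0 < m * √t)).comp_sub_right 1).const_mul (exp m)
  refine hmajorant.integrableOn.mono' ?_ ?_
  · exact ((continuous_tangentGap hβ0.le).const_mul t).neg.rexp.aestronglyMeasurable
  · filter_upwards [ae_restrict_mem measurableSet_Ioi] with s hs
    rw [norm_of_nonneg (exp_pos _).le]
    exact exp_neg_mul_tangentGap_le hβ0 hβ1 ht hm.le le_rfl (le_of_lt hs)

theorem exists_sqrt_mul_laplaceIntegral_le (hβ0 : 0 < β) (hβ1 : β ≤ 1) {t₀ : ℝ} (ht₀ : 0 < t₀) :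
    ∃ C > 0, ∀ t ≥ t₀, √t * laplaceIntegral β t ≤ C := by
  set m := (β + 1) * β * (1 + (√t₀)⁻¹) ^ (β - 1)
  have hm : 0 < m := by positivity
  refine ⟨2 * exp m / m, by positivity, fun t ht ↦ ?_⟩
  have ht0 : 0 < t := ht₀.trans_le ht
  have hmt : m ≤ (β + 1) * β * (1 + (√t)⁻¹) ^ (β - 1) := by
    gcongr (β + 1) * β * ?_
    exact rpow_le_rpow_of_nonpos (by positivity) (by gcongr) (by linarith)
  have hk : 0 < m * √t := by positivity
  have hmajorant := ((integrable_exp_neg_mul_abs hk).comp_sub_right 1).const_mul (exp m)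
  calc √t * laplaceIntegral β t
      ≤ √t * ∫ s in Ioi 0, exp m * exp (-(m * √t) * |s - 1|) := by
        refine mul_le_mul_of_nonneg_left ?_ (sqrt_nonneg t)
        exact setIntegral_mono_on (integrableOn_exp_neg_mul_tangentGap hβ0 hβ1 ht0)
          hmajorant.integrableOn measurableSet_Ioi
          fun s hs ↦ exp_neg_mul_tangentGap_le hβ0 hβ1 ht0 hm.le hmt (le_of_lt hs)
    _ ≤ √t * ∫ s, exp m * exp (-(m * √t) * |s - 1|) := by
        refine mul_le_mul_of_nonneg_left ?_ (sqrt_nonneg t)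
        exact setIntegral_le_integral hmajorant (ae_of_all _ fun s ↦ by positivity)
    _ = 2 * exp m / m := by
        rw [integral_const_mul, integral_sub_right_eq_self (fun s ↦ exp (-(m * √t) * |s|)),
          integral_exp_neg_mul_abs hk]
        field_simp

theorem exp_neg_le_sqrt_mul_laplaceIntegral (hβ0 : 0 < β) (hβ1 : β ≤ 1) (ht : 0 < t) :
    exp (-((β + 1) * β)) ≤ √t * laplaceIntegral β t := by
  set ε := (√t)⁻¹
  have hε : 0 < ε := by positivity
  have htε : t * ε ^ 2 = 1 := by rw [inv_pow, sq_sqrt ht.le, mul_inv_cancel₀ ht.ne']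
  have hnear : ∀ s ∈ Ioc 1 (1 + ε), exp (-((β + 1) * β)) ≤ exp (-(t * tangentGap β s)) := by
    intro s ⟨hs1, hs2⟩
    rw [exp_le_exp, neg_le_neg_iff]
    calc t * tangentGap β s ≤ t * ((β + 1) * β * ε ^ 2) := by
          gcongr
          refine (tangentGap_le_sq hβ0.le hβ1 hs1.le).trans ?_
          gcongr
          linarith
      _ = (β + 1) * β * (t * ε ^ 2) := by ring
      _ = (β + 1) * β := by rw [htε, mul_one]
  have hsub : Ioc 1 (1 + ε) ⊆ Ioi 0 := fun s hs ↦ zero_lt_one.trans hs.1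
  have hint := integrableOn_exp_neg_mul_tangentGap hβ0 hβ1 ht
  calc exp (-((β + 1) * β)) = √t * (ε * exp (-((β + 1) * β))) := by
        rw [← mul_assoc, mul_inv_cancel₀ (by positivity), one_mul]
    _ ≤ √t * ∫ s in Ioc 1 (1 + ε), exp (-(t * tangentGap β s)) := by
        refine mul_le_mul_of_nonneg_left ?_ (sqrt_nonneg t)
        have := setIntegral_ge_of_const_le_real measurableSet_Ioc (by simp) hnear
          (hint.mono_set hsub)
        simpa [max_eq_left hε.le, mul_comm] using this
    _ ≤ √t * laplaceIntegral β t := by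
        refine mul_le_mul_of_nonneg_left ?_ (sqrt_nonneg t)
        exact setIntegral_mono_set hint (ae_of_all _ fun s ↦ by positivity) hsub.eventuallyLE

end laplaceIntegral

theorem integral_comp_norm_complex (f : ℝ → ℝ) :
    ∫ z : ℂ, f ‖z‖ = 2 * π * ∫ r in Ioi 0, r * f r := by
  have hball : volume.real (Metric.ball (0 : ℂ) 1) = π := by
    simp [measureReal_def, Complex.volume_ball]
  rw [integral_fun_norm_addHaar volume f, Complex.finrank_real_complex, hball]
  simp [mul_assoc]

section expSubstitution

variable {τ : ℝ} (g : ℝ → ℝ)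

theorem integral_Ioi_one_eq_mul_integral_comp_exp_mul (hτ : 0 < τ) :
    ∫ r in Ioi 1, g r = τ * ∫ s in Ioi 0, exp (τ * s) * g (exp (τ * s)) := by
  have := integral_comp_mul_left_Ioi' (fun x ↦ exp x * g (exp x)) 0 hτ
  rw [mul_zero, smul_eq_mul] at this
  rw [this, ← exp_zero, ← integral_comp_exp_Ioi]
  rfl

theorem integrableOn_Ioi_one_iff_comp_exp_mul (hτ : 0 < τ) :
    IntegrableOn g (Ioi 1) ↔ IntegrableOn (fun s ↦ exp (τ * s) * g (exp (τ * s))) (Ioi 0) := by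
  rw [integrableOn_Ioi_comp_mul_left_iff (fun x ↦ exp x * g (exp x)) 0 hτ, mul_zero, ← exp_zero,
    ← integrableOn_comp_exp_Ioi]
  rfl

end expSubstitution

section moments

variable {β τ : ℝ} {n : ℕ}

theorem mom_eq_laplaceIntegral (hβ0 : 0 < β) (hβ1 : β ≤ 1) (hτ : 0 < τ)
    (hτn : (β + 1) * τ ^ β = n + 1) :
    mom β n = 2 * π * (1 / (2 * n + 2) +
      τ * exp (β * (2 * τ ^ (β + 1))) * laplaceIntegral β (2 * τ ^ (β + 1))) := by
  set f : ℝ → ℝ := fun r ↦ r * (r ^ (2 * n) * exp (-2 * max (log r) 0 ^ (β + 1)))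
  have hpolar : mom β n = 2 * π * ∫ r in Ioi 0, f r :=
    integral_comp_norm_complex fun r ↦ r ^ (2 * n) * exp (-2 * max (log r) 0 ^ (β + 1))
  have hsmall : EqOn f (fun r ↦ r ^ (2 * n + 1)) (Ioc 0 1) := fun r ⟨hr0, hr1⟩ ↦ by
    simp only [f, max_eq_right (log_nonpos hr0.le hr1), zero_rpow (add_pos hβ0 one_pos).ne']
    simp [pow_succ, mul_comm]
  have hlarge : EqOn (fun s ↦ exp (τ * s) * f (exp (τ * s)))
      (fun s ↦ exp (β * (2 * τ ^ (β + 1))) * exp (-(2 * τ ^ (β + 1) * tangentGap β s)))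
      (Ioi 0) := fun s hs ↦ by
    have hn : (n : ℝ) = (β + 1) * τ ^ β - 1 := by linarith
    simp only [f, log_exp, max_eq_left (mul_nonneg hτ.le (le_of_lt hs)),
      mul_rpow hτ.le (le_of_lt hs), ← exp_nat_mul, ← exp_add, tangentGap, rpow_add hτ, rpow_one]
    congr 1
    push_cast
    rw [hn]
    ring
  have hint_small : IntegrableOn f (Ioc 0 1) :=
    (continuous_pow _).integrableOn_Ioc.congr_fun hsmall.symm measurableSet_Ioc
  have hint_large : IntegrableOn f (Ioi 1) := by
    rw [integrableOn_Ioi_one_iff_comp_exp_mul f hτ]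
    exact IntegrableOn.congr_fun
      ((integrableOn_exp_neg_mul_tangentGap hβ0 hβ1 (by positivity)).const_mul _)
      hlarge.symm measurableSet_Ioi
  have hsplit : ∫ r in Ioi 0, f r = (∫ r in Ioc 0 1, f r) + ∫ r in Ioi 1, f r := by
    rw [← Ioc_union_Ioi_eq_Ioi zero_le_one,
      setIntegral_union (Ioc_disjoint_Ioi le_rfl) measurableSet_Ioi hint_small hint_large]
  rw [hpolar, hsplit, setIntegral_congr_fun measurableSet_Ioc hsmall,
    ← intervalIntegral.integral_of_le zero_le_one, integral_pow,
    integral_Ioi_one_eq_mul_integral_comp_exp_mul f hτ,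
    setIntegral_congr_fun measurableSet_Ioi hlarge, integral_const_mul, laplaceIntegral]
  push_cast
  ring

noncomputable def momScale (β : ℝ) (n : ℕ) : ℝ :=
  ((1 + n : ℝ) / (1 + β)) ^ ((1 - β) / (2 * β)) *
    exp (2 * β * ((1 + n : ℝ) / (1 + β)) ^ ((1 + β) / β))

theorem momScale_eq (hβ : 0 < β) (hτ : 0 < τ) (hτn : (β + 1) * τ ^ β = n + 1) :
    momScale β n = √2 * (τ / √(2 * τ ^ (β + 1))) * exp (β * (2 * τ ^ (β + 1))) := by
  have hx : (1 + n : ℝ) / (1 + β) = τ ^ β := by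
    rw [div_eq_iff (by positivity)]
    linarith
  have hsqrt : √(τ ^ (β + 1)) = τ ^ ((β + 1) / 2) := by
    rw [sqrt_eq_rpow, ← rpow_mul hτ.le]
    ring_nf
  have hprefactor : (τ ^ β) ^ ((1 - β) / (2 * β)) * τ ^ ((β + 1) / 2) = τ := by
    rw [← rpow_mul hτ.le, ← rpow_add hτ]
    convert rpow_one τ using 2
    field_simp
    ring
  have hexponent : (τ ^ β) ^ ((1 + β) / β) = τ ^ (β + 1) := by
    rw [← rpow_mul hτ.le]
    congr 1
    field_simp
    ring
  rw [momScale, hx, hexponent, sqrt_mul zero_le_two, hsqrt]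
  field_simp
  rw [mul_comm β 2, hprefactor]

theorem mom_eq_momScale (hβ0 : 0 < β) (hβ1 : β ≤ 1) (hτ : 0 < τ)
    (hτn : (β + 1) * τ ^ β = n + 1) :
    mom β n = 2 * π * (1 / (2 * n + 2) + momScale β n / √2 *
      (√(2 * τ ^ (β + 1)) * laplaceIntegral β (2 * τ ^ (β + 1)))) := by
  rw [mom_eq_laplaceIntegral hβ0 hβ1 hτ hτn, momScale_eq hβ0 hτ hτn]
  field_simp

theorem exists_le_mul_rpow_eq (hβ : 0 < β) (n : ℕ) :
    ∃ τ ≥ (β + 1)⁻¹ ^ β⁻¹, (β + 1) * τ ^ β = n + 1 := by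
  refine ⟨((n + 1) / (β + 1)) ^ β⁻¹, ?_, ?_⟩
  · exact rpow_le_rpow (by positivity) (by rw [inv_eq_one_div]; gcongr; simp) (by positivity)
  · rw [rpow_inv_rpow (by positivity) hβ.ne']
    field_simp

theorem rpow_le_momScale (hβ0 : 0 < β) (hβ1 : β ≤ 1) (n : ℕ) :
    (1 + β)⁻¹ ^ ((1 - β) / (2 * β)) ≤ momScale β n := by
  have hn : (1 + β)⁻¹ ≤ (1 + n : ℝ) / (1 + β) := by
    rw [inv_eq_one_div]
    gcongr
    simp
  refine (rpow_le_rpow (by positivity) hn (div_nonneg (by linarith) (by positivity))).trans ?_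
  exact le_mul_of_one_le_right (by positivity) (one_le_exp (by positivity))

end moments

theorem moment_asymptotics (β : ℝ) (hβ0 : 0 < β) (hβ1 : β < 1) :
    ∃ c C : ℝ, 0 < c ∧ 0 < C ∧ ∀ n : ℕ,
      c * (((1 + n : ℝ) / (1 + β)) ^ ((1 - β) / (2 * β)) *
          Real.exp (2 * β * ((1 + n : ℝ) / (1 + β)) ^ ((1 + β) / β))) ≤ mom β n ∧
      mom β n ≤ C * (((1 + n : ℝ) / (1 + β)) ^ ((1 - β) / (2 * β)) *
          Real.exp (2 * β * ((1 + n : ℝ) / (1 + β)) ^ ((1 + β) / β))) := by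
  set τ₀ := (β + 1)⁻¹ ^ β⁻¹
  set T₀ := (1 + β)⁻¹ ^ ((1 - β) / (2 * β))
  obtain ⟨C, hC, hupper⟩ :=
    exists_sqrt_mul_laplaceIntegral_le hβ0 hβ1.le (t₀ := 2 * τ₀ ^ (β + 1)) (by positivity)
  refine ⟨2 * π * exp (-((β + 1) * β)) / √2, 2 * π * (1 / (2 * T₀) + C / √2),
    by positivity, by positivity, fun n ↦ ?_⟩
  obtain ⟨τ, hτ₀τ, hτn⟩ := exists_le_mul_rpow_eq hβ0 n
  have hτ : 0 < τ := (by positivity : 0 < τ₀).trans_le hτ₀τ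
  have hT₀ : T₀ ≤ momScale β n := rpow_le_momScale hβ0 hβ1.le n
  have hdisc : 1 / (2 * n + 2) ≤ momScale β n / (2 * T₀) := by
    rw [div_le_div_iff₀ (by positivity) (by positivity)]
    nlinarith [mul_le_mul_of_nonneg_right hT₀ (by positivity : (0 : ℝ) ≤ 2 * n + 2),
      mul_nonneg (by positivity : (0 : ℝ) ≤ T₀) n.cast_nonneg]
  have hM : 0 ≤ momScale β n / √2 := div_nonneg ((by positivity : 0 ≤ T₀).trans hT₀) (by simp)
  have hlower := exp_neg_le_sqrt_mul_laplaceIntegral hβ0 hβ1.le (t := 2 * τ ^ (β + 1))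
    (by positivity)
  have hupper := hupper (2 * τ ^ (β + 1)) (by gcongr)
  rw [← momScale, mom_eq_momScale hβ0 hβ1.le hτ hτn]
  constructor
  · calc 2 * π * exp (-((β + 1) * β)) / √2 * momScale β n
        = 2 * π * (0 + momScale β n / √2 * exp (-((β + 1) * β))) := by ring
      _ ≤ _ := by gcongr; positivity
  · calc _ ≤ 2 * π * (momScale β n / (2 * T₀) + momScale β n / √2 * C) := by gcongr
      _ = 2 * π * (1 / (2 * T₀) + C / √2) * momScale β n := by ring
end

section
/- Let 0<β<1, and for integers n,k≥0 with k≠n define c(n,k) = (n−k)·((1+n)/(1+β))^{1/β} + β·[((1+k)/(1+β))^{(1+β)/β} − ((1+n)/(1+β))^{(1+β)/β}]. Then c(n,k) ≥ (1+β)^{-(1+β)/β} · |k−n|² · (1+n)^{1/β − 1}. -/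
/-!
With `p = (1 + β) / β ≥ 2`, `x = (1 + n) / (1 + β)`, `y = (1 + k) / (1 + β)` and `β p = 1 + β`,
the gap is `β (y^p - x^p - p (y - x) x^(p-1))`: `β` times the distance of `y^p` above the tangent
of `t ↦ t^p` at `x`. Scaling to `x = 1`, Bernoulli's inequality `t^(p-1) ≥ 1 + (p - 1)(t - 1)`
bounds this distance below by `(p - 1)(y - x)^2 x^(p-2)`, and `β (p - 1) = 1`.
-/

open Real

lemma sub_one_mul_sq_le_rpow_sub_tangent {q t : ℝ} (hq : 2 ≤ q) (ht : 0 ≤ t) :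
    (q - 1) * (t - 1) ^ 2 ≤ t ^ q - 1 - q * (t - 1) := by
  have bernoulli : 1 + (q - 1) * (t - 1) ≤ t ^ (q - 1) := by
    simpa using
      one_add_mul_self_le_rpow_one_add (by linarith : -1 ≤ t - 1) (by linarith : 1 ≤ q - 1)
  have hsplit : t ^ q = t ^ (q - 1) * t := by
    rw [← rpow_add_one' ht (by linarith)]; ring_nf
  nlinarith

lemma sub_one_mul_sq_mul_rpow_le_rpow_sub_tangent {q x y : ℝ} (hq : 2 ≤ q) (hx : 0 < x)
    (hy : 0 ≤ y) :
    (q - 1) * (y - x) ^ 2 * x ^ (q - 2) ≤ y ^ q - x ^ q - q * (y - x) * x ^ (q - 1) := by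
  obtain ⟨t, ht, rfl⟩ : ∃ t, 0 ≤ t ∧ y = x * t := ⟨y / x, by positivity, by field_simp⟩
  have key := mul_le_mul_of_nonneg_left (sub_one_mul_sq_le_rpow_sub_tangent hq ht)
    (rpow_nonneg hx.le q)
  rw [mul_rpow hx.le ht, rpow_sub hx, rpow_sub hx, rpow_one, rpow_two]
  calc (q - 1) * (x * t - x) ^ 2 * (x ^ q / x ^ 2) = x ^ q * ((q - 1) * (t - 1) ^ 2) := by
        field_simp
    _ ≤ x ^ q * (t ^ q - 1 - q * (t - 1)) := key
    _ = x ^ q * t ^ q - x ^ q - q * (x * t - x) * (x ^ q / x) := by field_simp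

theorem gap_lower_bound_general (β : ℝ) (hβ0 : 0 < β) (hβ1 : β < 1) (n k : ℕ) :
    ((n : ℝ) - k) * ((1 + n : ℝ) / (1 + β)) ^ (1 / β) +
        β * (((1 + k : ℝ) / (1 + β)) ^ ((1 + β) / β) - ((1 + n : ℝ) / (1 + β)) ^ ((1 + β) / β))
      ≥ (1 + β) ^ (-(1 + β) / β) * |(k : ℝ) - n| ^ 2 * (1 + n : ℝ) ^ (1 / β - 1) := by
  set q := (1 + β) / β with hq_def
  have hq : 2 ≤ q := by rw [le_div_iff₀ hβ0]; linarith
  have hβq : β * q = 1 + β := by rw [hq_def]; field_simp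
  have hc : 0 < 1 + β := by linarith
  have hexp₁ : 1 / β - 1 = q - 2 := by rw [hq_def]; field_simp; ring
  have hexp₂ : 1 / β = q - 1 := by rw [hq_def]; field_simp; ring
  have hexp₃ : -(1 + β) / β = -(q - 2) - 2 := by rw [hq_def]; ring
  rw [hexp₁, hexp₂, hexp₃, rpow_sub hc, rpow_neg hc.le, rpow_two, sq_abs, ge_iff_le]
  have hyx : (1 + β) * ((1 + k) / (1 + β) - (1 + n) / (1 + β)) = k - n := by field_simp; ring
  have hx : ((1 + n) / (1 + β)) ^ (q - 2) = (1 + n) ^ (q - 2) / (1 + β) ^ (q - 2) :=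
    div_rpow (by positivity) hc.le _
  have key := sub_one_mul_sq_mul_rpow_le_rpow_sub_tangent hq
    (x := (1 + n) / (1 + β)) (y := (1 + k) / (1 + β)) (by positivity) (by positivity)
  set x := (1 + n : ℝ) / (1 + β)
  set y := (1 + k : ℝ) / (1 + β)
  clear_value q x y
  have hcq : 0 < (1 + β) ^ (q - 2) := rpow_pos_of_pos hc _
  calc ((1 + β) ^ (q - 2))⁻¹ / (1 + β) ^ 2 * ((k : ℝ) - n) ^ 2 * (1 + n) ^ (q - 2)
      = β * ((q - 1) * (y - x) ^ 2 * x ^ (q - 2)) := by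
        rw [hx, ← hyx]; field_simp; linear_combination (-(y - x) ^ 2) * hβq
    _ ≤ β * (y ^ q - x ^ q - q * (y - x) * x ^ (q - 1)) := by
        gcongr
    _ = (n - k) * x ^ (q - 1) + β * (y ^ q - x ^ q) := by
        linear_combination (-(y - x) * x ^ (q - 1)) * hβq - x ^ (q - 1) * hyx

theorem gap_lower_bound (β : ℝ) (hβ0 : 0 < β) (hβ1 : β < 1) (n k : ℕ) (hnk : k ≠ n) :
    ((n : ℝ) - k) * ((1 + n : ℝ) / (1 + β)) ^ (1 / β) +
        β * (((1 + k : ℝ) / (1 + β)) ^ ((1 + β) / β) - ((1 + n : ℝ) / (1 + β)) ^ ((1 + β) / β))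
      ≥ (1 + β) ^ (-(1 + β) / β) * |(k : ℝ) - n| ^ 2 * (1 + n : ℝ) ^ (1 / β - 1) :=
  gap_lower_bound_general β hβ0 hβ1 n k
end

section
/- For 0<β<1, the double series ∑_{n=0}^∞ ∑_{k≠n} ((1+n)/(1+k))^{(1-β)/(2β)} · exp(−2(1+β)^{-(1+β)/β} |k−n|² (1+n)^{1/β−1}) converges. -/
/-!
For `k ≠ n` both `d = |k - n|` and `y = (1 + n) ^ (1/β - 1)` are at least `1`, so `2 d² y ≥ y + d`
splits the Gaussian factor into `exp (-b y) * exp (-b d)`. Since also `(1 + k) ^ (-α) ≤ 1`, the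
`(n, k)` term is dominated by `G n * H (k - n)`, where `G n = (1 + n) ^ α * exp (-b y)` is summable
because stretched-exponential decay beats every power, and `H j = exp (-b |j|)` is geometric.
As `(n, k) ↦ (n, k - n)` is injective, the product series `∑ G n H j` dominates the double series.
-/

open Real Filter Asymptotics

theorem summable_rpow_mul_exp_neg_mul_rpow (s : ℝ) {a γ : ℝ} (ha : 0 < a) (hγ : 0 < γ) :
    Summable fun n : ℕ => (n : ℝ) ^ s * exp (-a * (n : ℝ) ^ γ) := by
  have hlim : Tendsto (fun x : ℝ => x ^ (s + 2) * exp (-a * x ^ γ)) atTop (nhds 0) := by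
    refine ((tendsto_rpow_mul_exp_neg_mul_atTop_nhds_zero ((s + 2) / γ) a ha).comp
      (tendsto_rpow_atTop hγ)).congr' ?_
    filter_upwards [eventually_ge_atTop 0] with x hx
    simp only [Function.comp, ← rpow_mul hx, mul_div_cancel₀ _ hγ.ne']
  have hbig : (fun x : ℝ => x ^ s * exp (-a * x ^ γ)) =O[atTop] fun x => x ^ (-2 : ℝ) := by
    refine (hlim.isBigO_one ℝ |>.mul (isBigO_refl (fun x : ℝ => x ^ (-2 : ℝ)) atTop)).congr' ?_
      (by simp)
    filter_upwards [eventually_gt_atTop 0] with x hx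
    rw [mul_right_comm, ← rpow_add hx]
    norm_num
  exact summable_of_isBigO_nat (summable_nat_rpow.mpr (by norm_num))
    (hbig.comp_tendsto tendsto_natCast_atTop_atTop)

theorem summable_exp_neg_mul_abs_int {a : ℝ} (ha : 0 < a) :
    Summable fun j : ℤ => exp (-a * |(j : ℝ)|) := by
  have hnat : Summable fun n : ℕ => exp (n * -a) := summable_exp_nat_mul_iff.mpr (by linarith)
  apply Summable.of_nat_of_neg <;> refine hnat.congr fun n => ?_ <;> simp [mul_comm]

theorem summable_of_le_mul_sub {f : ℕ × ℕ → ℝ} {G : ℕ → ℝ} {H : ℤ → ℝ}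
    (hG : Summable G) (hH : Summable H) (hG0 : 0 ≤ G) (hH0 : 0 ≤ H) (hf0 : 0 ≤ f)
    (hf : ∀ n k : ℕ, f (n, k) ≤ G n * H (k - n)) : Summable f := by
  have hinj : Function.Injective fun p : ℕ × ℕ => (p.1, (p.2 : ℤ) - p.1) := by
    rintro ⟨n, k⟩ ⟨n', k'⟩ h
    simp only [Prod.mk.injEq] at h
    ext <;> omega
  exact ((hG.mul_of_nonneg hH hG0 hH0).comp_injective hinj).of_nonneg_of_le hf0
    fun p => hf p.1 p.2

theorem exp_neg_two_mul_sq_mul_le {b d y : ℝ} (hb : 0 ≤ b) (hd : 1 ≤ d) (hy : 1 ≤ y) :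
    exp (-2 * b * d ^ 2 * y) ≤ exp (-b * y) * exp (-b * d) := by
  rw [← exp_add, exp_le_exp]
  have hy' : y ≤ d * y := le_mul_of_one_le_left (by linarith) hd
  have hd' : d ≤ d * y := le_mul_of_one_le_right (by linarith) hy
  have hdy : d * y ≤ d ^ 2 * y := by
    rw [sq, mul_assoc]
    exact le_mul_of_one_le_left (by linarith) hd
  have : y + d ≤ 2 * (d ^ 2 * y) := by linarith
  linarith [mul_le_mul_of_nonneg_left this hb]

theorem one_le_abs_natCast_sub {k n : ℕ} (h : k ≠ n) : 1 ≤ |(k : ℝ) - n| := by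
  have : (1 : ℤ) ≤ |(k : ℤ) - n| := Int.one_le_abs (by omega)
  exact_mod_cast this

theorem double_series_converges (β : ℝ) (hβ0 : 0 < β) (hβ1 : β < 1) :
    Summable (fun p : ℕ × ℕ =>
      if p.2 = p.1 then (0 : ℝ)
      else ((1 + p.1 : ℝ) / (1 + p.2)) ^ ((1 - β) / (2 * β)) *
        Real.exp (-2 * (1 + β) ^ (-(1 + β) / β) * |(p.2 : ℝ) - p.1| ^ 2 *
          (1 + p.1 : ℝ) ^ (1 / β - 1))) := by
  set α := (1 - β) / (2 * β)
  set γ := 1 / β - 1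
  set b := (1 + β) ^ (-(1 + β) / β)
  have hα : 0 ≤ α := div_nonneg (by linarith) (by linarith)
  have hγ : 0 < γ := sub_pos.mpr (one_lt_one_div hβ0 hβ1)
  have hb : 0 < b := rpow_pos_of_pos (by linarith) _
  have hG : Summable fun n : ℕ => (1 + n : ℝ) ^ α * exp (-b * (1 + n : ℝ) ^ γ) := by
    refine ((summable_nat_add_iff 1).mpr (summable_rpow_mul_exp_neg_mul_rpow α hb hγ)).congr
      fun n => ?_
    push_cast
    rw [add_comm]
  refine summable_of_le_mul_sub hG (summable_exp_neg_mul_abs_int hb) (fun n => by positivity)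
    (fun j => by positivity) (fun p => by dsimp only; split_ifs <;> positivity) fun n k => ?_
  dsimp only
  split_ifs with hkn
  · positivity
  have h1n : (1 : ℝ) ≤ 1 + n := le_add_of_nonneg_right n.cast_nonneg
  have hratio : ((1 + n : ℝ) / (1 + k)) ^ α ≤ (1 + n : ℝ) ^ α :=
    rpow_le_rpow (by positivity)
      (div_le_self (by positivity) (le_add_of_nonneg_right k.cast_nonneg)) hα
  calc _ ≤ (1 + n : ℝ) ^ α * (exp (-b * (1 + n : ℝ) ^ γ) * exp (-b * |(k : ℝ) - n|)) :=
        mul_le_mul hratio (exp_neg_two_mul_sq_mul_le hb.le (one_le_abs_natCast_sub hkn)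
          (one_le_rpow h1n hγ.le)) (by positivity) (by positivity)
    _ = _ := by push_cast; ring
end

section
/- Let 0<β<1 and let Γ={γ_n : n≥0} with |γ_n| = exp(((1+n)/(1+β))^{1/β}) e^{δ_n} where (δ_n/(1+n)^{1/β−1}) is bounded. Then for any real α, the integral ∫_ℂ dist(z,Γ)²/(1+|z|)^{3+α} dm(z) is finite if and only if α > 1. -/
/-!
For `α > 1` the integrand is at most a constant times `(1 + |z|)^(-1-α)`, which is integrable on
`ℂ`, and lowering `α` only enlarges the integrand, so it remains to show divergence at `α = 1`.
The growth of `|γ_n|` forces `log |γ_n| ≥ n / 6` for large `n`, so only `N_k = O(k)` points lie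
in the disc of radius `3 e^k`. Removing discs of radius `e^k / √N_k` around them leaves at least
two thirds of the annulus `e^k ≤ |z| ≤ 2 e^k`, on which
`dist(z, Γ)² / (1 + |z|)^4 ≥ 1 / (81 N_k e^{2k})`. Each annulus therefore contributes `≳ 1/k`,
and the harmonic series diverges.
-/

open MeasureTheory Metric Set Filter Function Real

noncomputable def distIntegrand (T : Set ℂ) (α : ℝ) (z : ℂ) : ℝ :=
  infDist z T ^ 2 / (1 + ‖z‖) ^ (3 + α)

section Integrand

variable (T : Set ℂ)

lemma distIntegrand_nonneg (α : ℝ) (z : ℂ) : 0 ≤ distIntegrand T α z := by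
  unfold distIntegrand
  positivity

lemma continuous_distIntegrand (α : ℝ) : Continuous (distIntegrand T α) := by
  refine ((continuous_infDist_pt T).pow 2).div
    ((continuous_const.add continuous_norm).rpow_const fun z =>
      Or.inl (by positivity : (0 : ℝ) < 1 + ‖z‖).ne') fun z => by positivity

lemma distIntegrand_le_of_le {α α' : ℝ} (h : α ≤ α') (z : ℂ) :
    distIntegrand T α' z ≤ distIntegrand T α z := by
  unfold distIntegrand
  gcongr
  exact le_add_of_nonneg_right (norm_nonneg z)

variable {T}

lemma Integrable.distIntegrand_of_le {α α' : ℝ} (h : Integrable (distIntegrand T α))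
    (hα : α ≤ α') : Integrable (distIntegrand T α') := by
  refine h.mono (continuous_distIntegrand T α').aestronglyMeasurable (ae_of_all _ fun z => ?_)
  rw [norm_of_nonneg (distIntegrand_nonneg T α' z), norm_of_nonneg (distIntegrand_nonneg T α z)]
  exact distIntegrand_le_of_le T hα z

lemma infDist_le_one_add_norm_mul {t z : ℂ} (ht : t ∈ T) :
    infDist z T ≤ (1 + ‖t‖) * (1 + ‖z‖) := calc
  infDist z T ≤ ‖z‖ + ‖t‖ :=
    (infDist_le_dist_of_mem ht).trans (dist_eq_norm z t ▸ norm_sub_le z t)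
  _ ≤ (1 + ‖t‖) * (1 + ‖z‖) := by nlinarith [norm_nonneg z, norm_nonneg t]

lemma integrable_distIntegrand (hT : T.Nonempty) {α : ℝ} (hα : 1 < α) :
    Integrable (distIntegrand T α) := by
  obtain ⟨t, ht⟩ := hT
  have hdim : (Module.finrank ℝ ℂ : ℝ) < 1 + α := by
    rw [Complex.finrank_real_complex]
    push_cast
    linarith
  refine ((integrable_one_add_norm hdim).const_mul ((1 + ‖t‖) ^ 2)).mono'
    (continuous_distIntegrand T α).aestronglyMeasurable (ae_of_all _ fun z => ?_)
  have hz : 0 < 1 + ‖z‖ := by positivity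
  rw [norm_of_nonneg (distIntegrand_nonneg T α z)]
  calc distIntegrand T α z ≤ ((1 + ‖t‖) * (1 + ‖z‖)) ^ 2 / (1 + ‖z‖) ^ (3 + α) := by
        unfold distIntegrand
        gcongr
        · exact infDist_nonneg
        · exact infDist_le_one_add_norm_mul ht
    _ = (1 + ‖t‖) ^ 2 * (1 + ‖z‖) ^ (-(1 + α)) := by
        rw [mul_pow, mul_div_assoc, ← rpow_two (1 + ‖z‖), ← rpow_sub hz]
        ring_nf

end Integrand

lemma one_add_rpow_one_div_le_exp_one {β : ℝ} (hβ : 0 < β) :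
    (1 + β) ^ (1 / β) ≤ exp 1 := calc
  (1 + β) ^ (1 / β) ≤ exp β ^ (1 / β) := by
    gcongr
    linarith [add_one_le_exp β]
  _ = exp 1 := by rw [← exp_mul, mul_one_div_cancel hβ.ne']

lemma div_six_le_rpow_add {β B x d : ℝ} (hβ0 : 0 < β) (hβ1 : β < 1) (hx : 1 ≤ x)
    (hBx : 6 * B ≤ x) (hd : |d| ≤ B * x ^ (1 / β - 1)) :
    x / 6 ≤ (x / (1 + β)) ^ (1 / β) + d := by
  have hx0 : 0 < x := by linarith
  set y := x ^ (1 / β) with hy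
  have hxy : x ≤ y := by
    refine self_le_rpow_of_one_le hx ?_
    rw [le_div_iff₀ hβ0]
    linarith
  have hmain : y / 3 ≤ (x / (1 + β)) ^ (1 / β) := by
    rw [div_rpow hx0.le (by linarith), ← hy]
    gcongr
    exact (one_add_rpow_one_div_le_exp_one hβ0).trans (by linarith [exp_one_lt_d9])
  have hdelta : -(y / 6) ≤ d := by
    have hBy : B * x ^ (1 / β - 1) ≤ y / 6 := by
      rw [rpow_sub hx0, rpow_one, ← hy, mul_div_assoc', div_le_div_iff₀ hx0 (by norm_num)]
      nlinarith [hxy]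
    linarith [neg_abs_le d]
  linarith

lemma eventually_exp_le_norm {β : ℝ} (hβ0 : 0 < β) (hβ1 : β < 1)
    (γ : ℕ → ℂ) (δ : ℕ → ℝ)
    (hmod : ∀ n : ℕ, ‖γ n‖ = exp (((1 + n : ℝ) / (1 + β)) ^ (1 / β) + δ n))
    (hδ : ∃ B : ℝ, ∀ n : ℕ, |δ n| ≤ B * (1 + n : ℝ) ^ (1 / β - 1)) :
    ∀ᶠ n : ℕ in atTop, exp (6⁻¹ * n) ≤ ‖γ n‖ := by
  obtain ⟨B, hB⟩ := hδ
  filter_upwards [eventually_ge_atTop ⌈6 * B⌉₊] with n hn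
  have h6B : 6 * B ≤ 1 + n := by
    have := (Nat.ceil_le.1 hn)
    linarith
  rw [hmod n]
  gcongr
  linarith [div_six_le_rpow_add hβ0 hβ1 (by linarith [n.cast_nonneg (α := ℝ)]) h6B (hB n)]

lemma exists_three_exp_le_norm {c : ℝ} (hc : 0 < c) {γ : ℕ → ℂ}
    (h : ∀ᶠ n : ℕ in atTop, exp (c * n) ≤ ‖γ n‖) :
    ∃ m : ℕ, 0 < m ∧ ∀ k n : ℕ, m * (k + 1) ≤ n → 3 * exp k ≤ ‖γ n‖ := by
  obtain ⟨n₀, hn₀⟩ := eventually_atTop.1 h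
  refine ⟨n₀ + ⌈2 / c⌉₊ + 1, by omega, fun k n hn => ?_⟩
  have hm : n₀ + ⌈2 / c⌉₊ + 1 ≤ n := le_trans (Nat.le_mul_of_pos_right _ k.succ_pos) hn
  have hcn : (k : ℝ) + 2 ≤ c * n := calc
    (k : ℝ) + 2 ≤ c * (2 / c * (k + 1)) := by
      rw [← mul_assoc, mul_div_cancel₀ _ hc.ne']
      linarith [k.cast_nonneg (α := ℝ)]
    _ ≤ c * ((n₀ + ⌈2 / c⌉₊ + 1 : ℕ) * (k + 1) : ℕ) := by
      push_cast
      gcongr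
      linarith [Nat.le_ceil (2 / c), n₀.cast_nonneg (α := ℝ)]
    _ ≤ c * n := by gcongr
  calc 3 * exp k = exp (k + log 3) := by rw [exp_add, exp_log (by norm_num), mul_comm]
    _ ≤ exp (c * n) := by
      gcongr
      linarith [log_le_sub_one_of_pos (by norm_num : (0 : ℝ) < 3)]
    _ ≤ ‖γ n‖ := hn₀ n (by omega)

lemma ofReal_pow_two_mul_pi {r : ℝ} (hr : 0 ≤ r) :
    ENNReal.ofReal r ^ 2 * NNReal.pi = ENNReal.ofReal (π * r ^ 2) := by
  rw [mul_comm, ENNReal.ofReal_mul pi_pos.le, ENNReal.ofReal_pow hr, ← NNReal.coe_real_pi,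
    ENNReal.ofReal_coe_nnreal]

lemma volume_biUnion_ball_le (γ : ℕ → ℂ) (N : ℕ) {s : ℝ} (hs : 0 ≤ s) :
    volume (⋃ n ∈ Finset.range N, ball (γ n) s) ≤ ENNReal.ofReal (N * (π * s ^ 2)) := by
  refine (measure_biUnion_finset_le _ _).trans_eq ?_
  simp only [Complex.volume_ball, ofReal_pow_two_mul_pi hs, Finset.sum_const, Finset.card_range,
    nsmul_eq_mul]
  rw [ENNReal.ofReal_mul (Nat.cast_nonneg _), ENNReal.ofReal_natCast]

lemma le_volume_closedBall_diff (a : ℂ) {r : ℝ} (hr : 0 ≤ r) {S : Set ℂ}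
    (hS : volume S ≤ ENNReal.ofReal (π * r ^ 2)) :
    ENNReal.ofReal (2 * π * r ^ 2) ≤ volume (closedBall a (2 * r) \ (ball a r ∪ S)) := calc
  ENNReal.ofReal (2 * π * r ^ 2) = ENNReal.ofReal (π * (2 * r) ^ 2) -
      (ENNReal.ofReal (π * r ^ 2) + ENNReal.ofReal (π * r ^ 2)) := by
    rw [← ENNReal.ofReal_add (by positivity) (by positivity),
      ← ENNReal.ofReal_sub _ (by positivity)]
    ring_nf
  _ ≤ volume (closedBall a (2 * r)) - volume (ball a r ∪ S) := by
    rw [Complex.volume_closedBall, ofReal_pow_two_mul_pi (by positivity)]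
    refine tsub_le_tsub_left ((measure_union_le _ _).trans (add_le_add ?_ hS)) _
    rw [Complex.volume_ball, ofReal_pow_two_mul_pi hr]
  _ ≤ _ := le_measure_sdiff

lemma le_infDist_range {γ : ℕ → ℂ} {N : ℕ} {r s : ℝ} (hsr : s ≤ r)
    (hfar : ∀ n, N ≤ n → 3 * r ≤ ‖γ n‖) {z : ℂ} (hz : ‖z‖ ≤ 2 * r)
    (hnear : z ∉ ⋃ n ∈ Finset.range N, ball (γ n) s) : s ≤ infDist z (range γ) := by
  refine (le_infDist (range_nonempty γ)).2 ?_
  rintro _ ⟨n, rfl⟩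
  rcases lt_or_ge n N with hn | hn
  · by_contra h
    exact hnear (mem_biUnion (Finset.mem_coe.2 (Finset.mem_range.2 hn))
      (mem_ball.2 (not_le.1 h)))
  · calc s ≤ ‖γ n‖ - ‖z‖ := by linarith [hfar n hn]
      _ ≤ dist z (γ n) := by
        rw [dist_comm, dist_eq_norm]
        exact norm_sub_norm_le _ _

lemma le_lintegral_annulus_distIntegrand (γ : ℕ → ℂ) {r : ℝ} (hr : 1 ≤ r) {N : ℕ}
    (hN : 0 < N) (hfar : ∀ n, N ≤ n → 3 * r ≤ ‖γ n‖) :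
    ENNReal.ofReal (2 * π / (81 * N)) ≤
      ∫⁻ z in closedBall 0 (2 * r) \ ball 0 r,
        ENNReal.ofReal (distIntegrand (range γ) 1 z) := by
  have hN' : (0 : ℝ) < N := Nat.cast_pos.2 hN
  set s := r / √N
  have hs2 : s ^ 2 = r ^ 2 / N := by rw [div_pow, sq_sqrt hN'.le]
  have hsr : s ≤ r := div_le_self (by linarith) (one_le_sqrt.2 (Nat.one_le_cast.2 hN))
  set S := ⋃ n ∈ Finset.range N, ball (γ n) s
  set G := closedBall (0 : ℂ) (2 * r) \ (ball 0 r ∪ S)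
  have hvolS : volume S ≤ ENNReal.ofReal (π * r ^ 2) :=
    (volume_biUnion_ball_le γ N (by positivity)).trans_eq (by rw [hs2]; field_simp)
  have hbound : ∀ z ∈ G, s ^ 2 / (3 * r) ^ 4 ≤ distIntegrand (range γ) 1 z := by
    rintro z ⟨hz, hzS⟩
    have hz2r : ‖z‖ ≤ 2 * r := by simpa using hz
    have hdist := le_infDist_range hsr hfar hz2r fun h => hzS (Or.inr h)
    unfold distIntegrand
    rw [show (3 + 1 : ℝ) = (4 : ℕ) by norm_num, rpow_natCast]
    gcongr
    linarith
  calc ENNReal.ofReal (2 * π / (81 * N))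
      = ENNReal.ofReal (s ^ 2 / (3 * r) ^ 4) * ENNReal.ofReal (2 * π * r ^ 2) := by
        rw [← ENNReal.ofReal_mul (by positivity), hs2]
        congr 1
        field_simp
        ring
    _ ≤ ENNReal.ofReal (s ^ 2 / (3 * r) ^ 4) * volume G := by
        gcongr
        exact le_volume_closedBall_diff 0 (by linarith) hvolS
    _ = ∫⁻ _ in G, ENNReal.ofReal (s ^ 2 / (3 * r) ^ 4) := (setLIntegral_const _ _).symm
    _ ≤ ∫⁻ z in G, ENNReal.ofReal (distIntegrand (range γ) 1 z) :=
        setLIntegral_mono' (measurableSet_closedBall.diff (measurableSet_ball.union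
          (Finset.measurableSet_biUnion _ fun _ _ => measurableSet_ball)))
          fun z hz => ENNReal.ofReal_le_ofReal (hbound z hz)
    _ ≤ _ := lintegral_mono_set (sdiff_subset_sdiff_right subset_union_left)

lemma tsum_ofReal_div_succ_eq_top {c : ℝ} (hc : 0 < c) :
    ∑' k : ℕ, ENNReal.ofReal (c / (k + 1)) = ⊤ := by
  by_contra h
  have hsum : Summable fun k : ℕ => c / (k + 1) :=
    (ENNReal.summable_toReal h).congr fun k => ENNReal.toReal_ofReal (by positivity)
  apply Real.not_summable_one_div_natCast
  rw [← summable_nat_add_iff 1]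
  refine (hsum.mul_left c⁻¹).congr fun k => ?_
  push_cast
  field_simp

lemma not_integrable_distIntegrand_one {γ : ℕ → ℂ} {m : ℕ} (hm : 0 < m)
    (hfar : ∀ k n : ℕ, m * (k + 1) ≤ n → 3 * exp k ≤ ‖γ n‖) :
    ¬ Integrable (distIntegrand (range γ) 1) := by
  intro hint
  set A : ℕ → Set ℂ := fun k => closedBall 0 (2 * exp k) \ ball 0 (exp k)
  have hAdisj : Pairwise (Disjoint on A) := by
    refine (pairwise_disjoint_on A).2 fun j k hjk => disjoint_left.2 fun z hzj hzk => ?_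
    have h1 : ‖z‖ ≤ 2 * exp j := by simpa [A] using hzj.1
    have h2 : exp k ≤ ‖z‖ := by simpa [A] using hzk.2
    have h3 : exp j * exp 1 ≤ exp k := by
      rw [← exp_add]
      exact exp_le_exp.2 (by exact_mod_cast hjk)
    nlinarith [exp_pos j, exp_one_gt_d9]
  have hterm : ∀ k : ℕ, ENNReal.ofReal (2 * π / (81 * m) / (k + 1)) ≤
      ∫⁻ z in A k, ENNReal.ofReal (distIntegrand (range γ) 1 z) := fun k => by
    convert le_lintegral_annulus_distIntegrand γ (one_le_exp k.cast_nonneg)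
      (Nat.mul_pos hm k.succ_pos) (hfar k) using 2
    push_cast
    rw [div_div, mul_assoc]
  refine hint.lintegral_lt_top.ne (eq_top_iff.2 ?_)
  calc ⊤ = ∑' k : ℕ, ENNReal.ofReal (2 * π / (81 * m) / (k + 1)) :=
        (tsum_ofReal_div_succ_eq_top (by positivity)).symm
    _ ≤ ∑' k, ∫⁻ z in A k, ENNReal.ofReal (distIntegrand (range γ) 1 z) :=
        ENNReal.tsum_le_tsum hterm
    _ = ∫⁻ z in ⋃ k, A k, ENNReal.ofReal (distIntegrand (range γ) 1 z) :=
        (lintegral_iUnion (fun _ => measurableSet_closedBall.diff measurableSet_ball) hAdisj _).symm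
    _ ≤ ∫⁻ z, ENNReal.ofReal (distIntegrand (range γ) 1 z) := setLIntegral_le_lintegral _ _

theorem dist_integral_finite_iff (β : ℝ) (hβ0 : 0 < β) (hβ1 : β < 1)
    (γ : ℕ → ℂ) (δ : ℕ → ℝ)
    (hmod : ∀ n : ℕ, ‖γ n‖ =
      Real.exp (((1 + n : ℝ) / (1 + β)) ^ (1 / β) + δ n))
    (hδ : ∃ B : ℝ, ∀ n : ℕ, |δ n| ≤ B * (1 + n : ℝ) ^ (1 / β - 1))
    (α : ℝ) :
    Integrable (fun z : ℂ =>
        (Metric.infDist z (Set.range γ)) ^ 2 / (1 + ‖z‖) ^ (3 + α)) ↔ 1 < α := by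
  show Integrable (distIntegrand (range γ) α) ↔ 1 < α
  refine ⟨fun hint => ?_, integrable_distIntegrand (range_nonempty γ)⟩
  by_contra hα
  obtain ⟨m, hm, hfar⟩ :=
    exists_three_exp_le_norm (by norm_num) (eventually_exp_le_norm hβ0 hβ1 γ δ hmod hδ)
  exact not_integrable_distIntegrand_one hm hfar
    (Integrable.distIntegrand_of_le hint (not_lt.1 hα))
end

section
/- Let Γ⊂ℂ and define d(z,w)=|z−w|/(1+min(|z|,|w|)). If the set logΓ := {log|γ| : γ∈Γ} (of moduli logarithms, with |γ|>0) is separated (i.e., inf over distinct pairs of |log|γ|−log|γ'|| is positive), then Γ is d-separated: inf{d(γ,γ'): γ≠γ'∈Γ} > 0. Conversely, if Γ is d-separated then logΓ is a finite union of separated sequences of real numbers. -/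
/-!
If `log |γ|` jumps by at least `ε` between points, then `|γ - γ'| ≥ (e^ε - 1) min(|γ|, |γ'|)`,
and `m / (1 + m) ≥ r / (1 + r)` for `m ≥ r`.

Conversely, cut the plane into the annuli `e^n ≤ |z| < e^(n+1)` and rescale each onto
`1 ≤ |z| < e`. Within one annulus `d` is at most the distance of the rescaled points, so two
`δ`-separated points of one annulus cannot both rescale into one ball of a fixed finite cover
of the disc of radius `e` by balls of radius `δ / 2`. Colouring each point by the parity of its
annulus and a ball containing its rescaled image, two points of one colour therefore lie in
different annuli of the same parity, hence at least one unit apart in `log |z|`.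
-/

/-- the distance `d(z,w) = |z-w| / (1 + min(|z|,|w|))` -/
noncomputable def dd (z w : ℂ) : ℝ :=
  ‖z - w‖ / (1 + min ‖z‖ ‖w‖)

open Real

lemma dd_comm (z w : ℂ) : dd z w = dd w z := by
  rw [dd, dd, norm_sub_rev, min_comm]

lemma le_dd_of_le_log_sub {r ε : ℝ} {z w : ℂ} (hr : 0 < r) (hε : 0 ≤ ε) (hz : r ≤ ‖z‖)
    (hzw : ‖z‖ ≤ ‖w‖) (hlog : ε ≤ log ‖w‖ - log ‖z‖) : r * (exp ε - 1) / (1 + r) ≤ dd z w := by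
  have hz0 : 0 < ‖z‖ := hr.trans_le hz
  have hgrowth : exp ε * ‖z‖ ≤ ‖w‖ := by
    rw [← le_div_iff₀ hz0]
    calc exp ε ≤ exp (log ‖w‖ - log ‖z‖) := exp_le_exp.2 hlog
      _ = ‖w‖ / ‖z‖ := by rw [exp_sub, exp_log (hz0.trans_le hzw), exp_log hz0]
  have hnum : (exp ε - 1) * ‖z‖ ≤ ‖z - w‖ := by
    have := norm_sub_norm_le w z
    rw [norm_sub_rev] at this
    linarith
  have hfrac : r / (1 + r) ≤ ‖z‖ / (1 + ‖z‖) := by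
    rw [div_le_div_iff₀ (by linarith) (by linarith)]
    linarith
  have hgrowth_nonneg : 0 ≤ exp ε - 1 := sub_nonneg.2 (one_le_exp hε)
  calc r * (exp ε - 1) / (1 + r) = (exp ε - 1) * (r / (1 + r)) := by ring
    _ ≤ (exp ε - 1) * (‖z‖ / (1 + ‖z‖)) := mul_le_mul_of_nonneg_left hfrac hgrowth_nonneg
    _ = (exp ε - 1) * ‖z‖ / (1 + ‖z‖) := by ring
    _ ≤ dd z w := by
      rw [dd, min_eq_left hzw]
      exact div_le_div_of_nonneg_right hnum (by linarith)

lemma le_dd_of_le_abs_log_sub {r ε : ℝ} {z w : ℂ} (hr : 0 < r) (hε : 0 ≤ ε) (hz : r ≤ ‖z‖)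
    (hw : r ≤ ‖w‖) (hlog : ε ≤ |log ‖z‖ - log ‖w‖|) : r * (exp ε - 1) / (1 + r) ≤ dd z w := by
  rcases le_total ‖z‖ ‖w‖ with hzw | hwz
  · have hmono := log_le_log (hr.trans_le hz) hzw
    rw [abs_sub_comm, abs_of_nonneg (by linarith)] at hlog
    exact le_dd_of_le_log_sub hr hε hz hzw hlog
  · have hmono := log_le_log (hr.trans_le hw) hwz
    rw [abs_of_nonneg (by linarith)] at hlog
    rw [dd_comm]
    exact le_dd_of_le_log_sub hr hε hw hwz hlog

lemma dd_le_dist_smul {a : ℝ} {z w : ℂ} (hz : exp a ≤ ‖z‖) (hw : exp a ≤ ‖w‖) :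
    dd z w ≤ dist (exp (-a) • z) (exp (-a) • w) := by
  rw [dist_eq_norm, ← smul_sub, norm_smul, norm_of_nonneg (exp_pos _).le, exp_neg,
    inv_mul_eq_div, dd]
  have hmin := le_min hz hw
  exact div_le_div_of_nonneg_left (norm_nonneg _) (exp_pos a) (by linarith)

lemma exp_floor_log_le {x : ℝ} (hx : 0 < x) : exp ⌊log x⌋ ≤ x := by
  simpa [exp_log hx] using exp_le_exp.2 (Int.floor_le (log x))

lemma lt_exp_floor_log_add_one {x : ℝ} (hx : 0 < x) : x < exp (⌊log x⌋ + 1) := by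
  simpa [exp_log hx] using exp_lt_exp.2 (Int.lt_floor_add_one (log x))

lemma norm_exp_neg_floor_log_smul_lt {z : ℂ} (hz : z ≠ 0) :
    ‖exp (-⌊log ‖z‖⌋) • z‖ < exp 1 := by
  have hz0 : 0 < ‖z‖ := norm_pos_iff.2 hz
  rw [norm_smul, norm_of_nonneg (exp_pos _).le]
  calc exp (-⌊log ‖z‖⌋) * ‖z‖ < exp (-⌊log ‖z‖⌋) * exp (⌊log ‖z‖⌋ + 1) :=
        mul_lt_mul_of_pos_left (lt_exp_floor_log_add_one hz0) (exp_pos _)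
    _ = exp 1 := by rw [← exp_add]; ring_nf

lemma one_le_abs_sub_of_floor_ne {x y : ℝ} (hne : ⌊x⌋ ≠ ⌊y⌋) (hpar : 2 ∣ ⌊y⌋ - ⌊x⌋) :
    1 ≤ |x - y| := by
  have hgap : ⌊x⌋ + 2 ≤ ⌊y⌋ ∨ ⌊y⌋ + 2 ≤ ⌊x⌋ := by omega
  have := Int.floor_le x
  have := Int.floor_le y
  have := Int.lt_floor_add_one x
  have := Int.lt_floor_add_one y
  rcases hgap with h | h
  · have h' : (⌊x⌋ : ℝ) + 2 ≤ ⌊y⌋ := by exact_mod_cast h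
    rw [abs_sub_comm, abs_of_nonneg (by linarith)]
    linarith
  · have h' : (⌊y⌋ : ℝ) + 2 ≤ ⌊x⌋ := by exact_mod_cast h
    rw [abs_of_nonneg (by linarith)]
    linarith

lemma exists_fin_iUnion_eq_of_finite {α ι : Type*} [Finite ι] {s : Set α} {p : Set α → Prop}
    (P : ι → Set α) (hs : s = ⋃ i, P i) (hP : ∀ i, p (P i)) :
    ∃ (k : ℕ) (Q : Fin k → Set α), s = ⋃ j, Q j ∧ ∀ j, p (Q j) := by
  obtain ⟨k, ⟨e⟩⟩ := Finite.exists_equiv_fin ι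
  exact ⟨k, P ∘ e.symm, hs.trans (e.symm.iSup_comp).symm, fun j => hP _⟩

theorem exists_fin_cover_log_separated {Γ : Set ℂ} (h0 : ∀ γ ∈ Γ, γ ≠ 0) {δ : ℝ} (hδ : 0 < δ)
    (hsep : Γ.Pairwise fun γ γ' => δ ≤ dd γ γ') :
    ∃ (k : ℕ) (P : Fin k → Set ℂ), Γ = ⋃ i, P i ∧
      ∀ i, (P i).Pairwise fun γ γ' => 1 ≤ |log ‖γ‖ - log ‖γ'‖| := by
  obtain ⟨t, -, ht, hcover⟩ :=
    finite_cover_balls_of_compact (isCompact_closedBall (0 : ℂ) (exp 1)) (half_pos hδ)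
  have := ht.to_subtype
  set level : ℂ → ℤ := fun z => ⌊log ‖z‖⌋
  set rescale : ℂ → ℂ := fun z => exp (-level z) • z
  refine exists_fin_iUnion_eq_of_finite (ι := ZMod 2 × t) (p := fun P => P.Pairwise _)
    (fun i => {z ∈ Γ | (level z : ZMod 2) = i.1 ∧ dist (rescale z) i.2 < δ / 2}) ?_ ?_
  · refine Set.Subset.antisymm (fun z hz => ?_) (Set.iUnion_subset fun _ _ hz => hz.1)
    have hdisc : rescale z ∈ Metric.closedBall 0 (exp 1) := by
      rw [Metric.mem_closedBall, dist_zero_right]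
      exact (norm_exp_neg_floor_log_smul_lt (h0 z hz)).le
    obtain ⟨c, hc, hzc⟩ := Set.mem_iUnion₂.1 (hcover hdisc)
    exact Set.mem_iUnion.2 ⟨((level z : ZMod 2), ⟨c, hc⟩), hz, rfl, hzc⟩
  rintro ⟨p, c, _⟩ z ⟨hz, hzp, hzc⟩ w ⟨hw, hwp, hwc⟩ hne
  by_cases hlevel : level z = level w
  · have hfloor_z := exp_floor_log_le (norm_pos_iff.2 (h0 z hz))
    have hfloor_w := exp_floor_log_le (norm_pos_iff.2 (h0 w hw))
    have hclose : dd z w < δ :=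
      calc dd z w ≤ dist (rescale z) (rescale w) := by
            simp only [rescale, hlevel]
            exact dd_le_dist_smul (hlevel ▸ hfloor_z) hfloor_w
        _ ≤ dist (rescale z) c + dist (rescale w) c := dist_triangle_right _ _ _
        _ < δ := by linarith
    exact absurd (hsep hz hw hne) hclose.not_ge
  · exact one_le_abs_sub_of_floor_ne hlevel
      ((ZMod.intCast_eq_intCast_iff_dvd_sub _ _ 2).1 (hzp.trans hwp.symm))

theorem d_separated_iff_log_separated (Γ : Set ℂ) (r : ℝ) (hr : 0 < r)
    (hΓ : ∀ γ ∈ Γ, r ≤ ‖γ‖) :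
    -- if log Γ is separated then Γ is d-separated
    ((∃ ε : ℝ, 0 < ε ∧ ∀ γ ∈ Γ, ∀ γ' ∈ Γ, γ ≠ γ' →
        ε ≤ |Real.log ‖γ‖ - Real.log ‖γ'‖|) →
      ∃ dΓ : ℝ, 0 < dΓ ∧ ∀ γ ∈ Γ, ∀ γ' ∈ Γ, γ ≠ γ' → dΓ ≤ dd γ γ') ∧
    -- if Γ is d-separated then log Γ is a finite union of separated sequences
    ((∃ dΓ : ℝ, 0 < dΓ ∧ ∀ γ ∈ Γ, ∀ γ' ∈ Γ, γ ≠ γ' → dΓ ≤ dd γ γ') →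
      ∃ (k : ℕ) (P : Fin k → Set ℂ), Γ = ⋃ i : Fin k, P i ∧
        ∀ i : Fin k, ∃ ε : ℝ, 0 < ε ∧ ∀ γ ∈ P i, ∀ γ' ∈ P i, γ ≠ γ' →
          ε ≤ |Real.log ‖γ‖ - Real.log ‖γ'‖|) := by
  refine ⟨fun ⟨ε, hε, hlog⟩ => ?_, fun ⟨δ, hδ, hsep⟩ => ?_⟩
  · have hexp : 0 < exp ε - 1 := sub_pos.2 (one_lt_exp_iff.2 hε)
    exact ⟨r * (exp ε - 1) / (1 + r), by positivity, fun γ hγ γ' hγ' hne =>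
      le_dd_of_le_abs_log_sub hr hε.le (hΓ γ hγ) (hΓ γ' hγ') (hlog γ hγ γ' hγ' hne)⟩
  · obtain ⟨k, P, hcover, hP⟩ := exists_fin_cover_log_separated
      (fun γ hγ => norm_pos_iff.1 (hr.trans_le (hΓ γ hγ))) hδ hsep
    exact ⟨k, P, hcover, fun i => ⟨1, one_pos, hP i⟩⟩
end

section
/- Let 0<β<1 and u_n=((1+n)/(1+β))^{1/β}. For nonnegative integers n,m define α(n,m) = β((1+n)/(1+β))^{(1+β)/β} − β((1+m)/(1+β))^{(1+β)/β} + ∑_{k=0}^{m} u_k − ∑_{k=0}^{n} u_k. Then as n,m→∞, α(n,m) = (1/2)(u_m − u_n) + ((1+o(1))/(12β(1+β)))·(((1+m)/(1+β))^{(1−β)/β} − ((1+n)/(1+β))^{(1−β)/β}); in particular there is a constant c_β>0 such that α(n,m) ≥ c_β|u_m − u_n| − C for some C>0 whenever m ≥ n. -/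
open Filter

noncomputable def u (β : ℝ) (n : ℕ) : ℝ := ((1 + n : ℝ) / (1 + β)) ^ (1 / β)

noncomputable def alph (β : ℝ) (n m : ℕ) : ℝ :=
  β * ((1 + n : ℝ) / (1 + β)) ^ ((1 + β) / β) -
    β * ((1 + m : ℝ) / (1 + β)) ^ ((1 + β) / β) +
    (∑ k ∈ Finset.range (m + 1), u β k) - ∑ k ∈ Finset.range (n + 1), u β k

/-!
Write `α(n, m) = F m - F n` with `F n = ∑_{k ≤ n} u_k - β x_n^{(1+β)/β}`, `x_k = (1 + k)/(1 + β)`: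
a sum of `f x = x^{1/β}` over the nodes `x_k` minus `(1 + β) ∫₀^{x_n} f`. Removing the
Euler–Maclaurin terms `u_n / 2 + v_n / (12 β (1 + β))`, `v_n = x_n^{(1-β)/β}`, leaves a remainder
`g`. Rescaling by `x_k`, the increment `g_{k+1} - g_k` is `x_k^{1/β} (k + 1)` times the error of the
corrected trapezoid rule for `x ^ (1/β)` on `[1, 1 + t]`, `t = 1/(k + 1)`; by the binomial series
that error is `O(t⁴)`, while `v_{k+1} - v_k ≍ x_k^{1/β} (k + 1) t³`. Hence
`g_m - g_n = o(v_m - v_n)` as `n, m → ∞`, which is the expansion; and `v / (12 β (1 + β)) + g` is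
eventually increasing, which gives the lower bound with `c = 1/2`.
-/

open Asymptotics Finset Topology Set

theorem Ring.choose_two_eq {K : Type*} [Field K] [CharZero K] (a : K) :
    Ring.choose a 2 = a * (a - 1) / 2 := by
  simp only [Ring.choose_eq_smul, Nat.factorial, Nat.succ_eq_add_one, Nat.reduceAdd, zero_add,
    mul_one, descPochhammer_succ_right, descPochhammer_zero, CharP.cast_eq_zero, sub_zero, one_mul,
    Nat.cast_one, Polynomial.smeval_mul, Polynomial.smeval_X, pow_one, Polynomial.smeval_sub,
    Polynomial.smeval_one, pow_zero, one_smul, smul_eq_mul]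
  ring

theorem Ring.choose_three_eq {K : Type*} [Field K] [CharZero K] (a : K) :
    Ring.choose a 3 = a * (a - 1) * (a - 2) / 6 := by
  simp only [Ring.choose_eq_smul, Nat.factorial, Nat.succ_eq_add_one, Nat.reduceAdd, zero_add,
    mul_one, Nat.reduceMul, descPochhammer_succ_right, descPochhammer_zero, CharP.cast_eq_zero,
    sub_zero, one_mul, Nat.cast_one, Polynomial.smeval_mul, Polynomial.smeval_X, pow_one,
    Polynomial.smeval_sub, Polynomial.smeval_one, pow_zero, one_smul, Polynomial.smeval_natCast,
    nsmul_eq_mul, smul_eq_mul]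
  ring

theorem one_add_rpow_sub_sum_isBigO (a : ℝ) (n : ℕ) :
    (fun t : ℝ => (1 + t) ^ a - ∑ k ∈ range n, Ring.choose a k * t ^ k) =O[𝓝 0]
      fun t => t ^ n := by
  have h := Real.one_add_rpow_hasFPowerSeriesAt_zero (a := a) |>.isBigO_sub_partialSum_pow n
  have hnorm : (fun t : ℝ => ‖t‖ ^ n) =O[𝓝 0] fun t => t ^ n := by
    simpa only [norm_pow] using (isBigO_refl (fun t : ℝ => t ^ n) (𝓝 0)).norm_left
  simpa [FormalMultilinearSeries.partialSum, binomialSeries, FormalMultilinearSeries.ofScalars]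
    using h.trans hnorm

theorem one_add_rpow_sub_one_isEquivalent {a : ℝ} (ha : a ≠ 0) :
    (fun t : ℝ => (1 + t) ^ a - 1) ~[𝓝 0] fun t => a * t := by
  have h := one_add_rpow_sub_sum_isBigO a 2
  simp only [sum_range_succ, range_zero, sum_empty, Ring.choose_zero_right,
    Ring.choose_one_right] at h
  refine ((h.trans_isLittleO (isLittleO_pow_id one_lt_two)).const_mul_right ha).congr_left
    fun t => ?_
  simp only [Pi.sub_apply]
  ring

theorem isBigO_one_add_rpow_sub_one {a : ℝ} (ha : a ≠ 0) :
    (fun t : ℝ => t) =O[𝓝 0] fun t => (1 + t) ^ a - 1 :=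
  (isBigO_self_const_mul ha _ _).trans (one_add_rpow_sub_one_isEquivalent ha).isBigO_symm

/-- The trapezoid value `t (f 1 + f (1 + t)) / 2`, minus `∫₁^{1+t} f`, minus the Euler–Maclaurin
correction `t² (f' (1 + t) - f' 1) / 12`, for `f x = x ^ s`. -/
noncomputable def correctedTrapezoidError (s t : ℝ) : ℝ :=
  t * (1 + (1 + t) ^ s) / 2 - ((1 + t) ^ (s + 1) - 1) / (s + 1) -
    s * t ^ 2 / 12 * ((1 + t) ^ (s - 1) - 1)

theorem correctedTrapezoidError_isBigO {s : ℝ} (hs : s + 1 ≠ 0) :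
    (fun t => correctedTrapezoidError s t) =O[𝓝 0] fun t => t ^ 4 := by
  have h₀ : (fun t => t * ((1 + t) ^ s - ∑ k ∈ range 3, Ring.choose s k * t ^ k)) =O[𝓝 0]
      fun t => t ^ 4 :=
    ((isBigO_refl _ _).mul (one_add_rpow_sub_sum_isBigO s 3)).congr_right fun t => by ring
  have h₂ : (fun t => t ^ 2 * ((1 + t) ^ (s - 1) - ∑ k ∈ range 2, Ring.choose (s - 1) k * t ^ k))
      =O[𝓝 0] fun t => t ^ 4 :=
    ((isBigO_refl _ _).mul (one_add_rpow_sub_sum_isBigO (s - 1) 2)).congr_right fun t => by ring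
  refine ((h₀.const_mul_left (1 / 2)).sub
    ((one_add_rpow_sub_sum_isBigO (s + 1) 4).const_mul_left (1 / (s + 1))) |>.sub
    (h₂.const_mul_left (s / 12))).congr_left fun t => ?_
  -- the Taylor polynomials cancel: only the remainders survive
  simp only [sum_range_succ, range_zero, sum_empty, Ring.choose_zero_right,
    Ring.choose_one_right, Ring.choose_two_eq, Ring.choose_three_eq, correctedTrapezoidError]
  field_simp
  ring

theorem correctedTrapezoidError_isLittleO {s : ℝ} (hs : s + 1 ≠ 0) (hs₁ : s ≠ 1) :
    (fun t => correctedTrapezoidError s t) =o[𝓝 0] fun t => t ^ 2 * ((1 + t) ^ (s - 1) - 1) := by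
  have hsq : (fun t : ℝ => t ^ 2) =o[𝓝 0] fun t => (1 + t) ^ (s - 1) - 1 :=
    (isLittleO_pow_id one_lt_two).trans_isBigO (isBigO_one_add_rpow_sub_one (sub_ne_zero.2 hs₁))
  refine (correctedTrapezoidError_isBigO hs).trans_isLittleO ?_
  exact ((isBigO_refl (fun t : ℝ => t ^ 2) _).mul_isLittleO hsq).congr_left fun t => by ring

section
variable {G A : ℕ → ℝ}

theorem exists_abs_sub_le_of_isLittleO (hA : Monotone A)
    (h : (fun k => G (k + 1) - G k) =o[atTop] fun k => A (k + 1) - A k) {ε : ℝ} (hε : 0 < ε) :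
    ∃ N, ∀ n m, N ≤ n → n ≤ m → |G m - G n| ≤ ε * (A m - A n) := by
  obtain ⟨N, hN⟩ := eventually_atTop.1 (h.bound hε)
  refine ⟨N, fun n m hn hnm => ?_⟩
  induction m, hnm using Nat.le_induction with
  | base => simp
  | succ m hnm ih =>
    have hstep : |G (m + 1) - G m| ≤ ε * (A (m + 1) - A m) := by
      simpa [abs_of_nonneg (sub_nonneg.2 (hA m.le_succ))] using hN m (hn.trans hnm)
    calc |G (m + 1) - G n| ≤ |G (m + 1) - G m| + |G m - G n| := abs_sub_le _ _ _
      _ ≤ ε * (A (m + 1) - A m) + ε * (A m - A n) := add_le_add hstep ih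
      _ = ε * (A (m + 1) - A n) := by ring

theorem tendsto_div_sub_of_isLittleO (hA : Monotone A)
    (h : (fun k => G (k + 1) - G k) =o[atTop] fun k => A (k + 1) - A k) :
    Tendsto (fun p : ℕ × ℕ => (G p.2 - G p.1) / (A p.2 - A p.1)) atTop (𝓝 0) := by
  refine NormedAddGroup.tendsto_nhds_zero.2 fun ε hε => ?_
  obtain ⟨N, hN⟩ := exists_abs_sub_le_of_isLittleO hA h (half_pos hε)
  have hsymm : ∀ n m, N ≤ n → N ≤ m → |G m - G n| ≤ ε / 2 * |A m - A n| := by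
    intro n m hn hm
    rcases le_total n m with hnm | hmn
    · rw [abs_of_nonneg (sub_nonneg.2 (hA hnm))]
      exact hN n m hn hnm
    · rw [abs_sub_comm, abs_sub_comm (A m), abs_of_nonneg (sub_nonneg.2 (hA hmn))]
      exact hN m n hm hmn
  refine eventually_atTop.2 ⟨(N, N), fun p hp => ?_⟩
  rw [Real.norm_eq_abs, abs_div]
  exact (div_le_of_le_mul₀ (abs_nonneg _) (half_pos hε).le (hsymm _ _ hp.1 hp.2)).trans_lt
    (half_lt_self hε)

end

theorem exists_le_add_of_monotoneOn_Ici {H : ℕ → ℝ} {N : ℕ} (hH : MonotoneOn H (Ici N)) :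
    ∃ C > 0, ∀ n m, n ≤ m → H n ≤ H m + C := by
  obtain ⟨U, hU⟩ := ((finite_Iic N).image H).bddAbove
  obtain ⟨L, hL⟩ := ((finite_Iic N).image H).bddBelow
  have hLU : L ≤ U :=
    (hL (mem_image_of_mem H (Nat.zero_le N))).trans (hU (mem_image_of_mem H (Nat.zero_le N)))
  refine ⟨U - L + 1, by linarith, fun n m hnm => ?_⟩
  have hm : L ≤ H m := by
    rcases le_total m N with hmN | hNm
    · exact hL (mem_image_of_mem H hmN)
    · exact (hL (mem_image_of_mem H self_mem_Iic)).trans (hH self_mem_Ici hNm hNm)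
  rcases le_total N n with hNn | hnN
  · linarith [hH hNn (hNn.trans hnm) hnm]
  · linarith [hU (mem_image_of_mem H hnN)]

noncomputable def sumMinusIntegral (β : ℝ) (n : ℕ) : ℝ :=
  ∑ k ∈ range (n + 1), u β k - β * ((1 + n : ℝ) / (1 + β)) ^ ((1 + β) / β)

noncomputable def v (β : ℝ) (n : ℕ) : ℝ := ((1 + n : ℝ) / (1 + β)) ^ ((1 - β) / β)

noncomputable def emRemainder (β : ℝ) (n : ℕ) : ℝ :=
  sumMinusIntegral β n - (u β n / 2 + v β n / (12 * β * (1 + β)))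

theorem alph_eq_sub (β : ℝ) (n m : ℕ) :
    alph β n m = sumMinusIntegral β m - sumMinusIntegral β n := by
  simp only [alph, sumMinusIntegral]
  ring

theorem u_monotone {β : ℝ} (hβ : 0 < β) : Monotone (u β) := fun n m hnm => by
  unfold u
  gcongr

theorem v_strictMono {β : ℝ} (hβ₀ : 0 < β) (hβ₁ : β < 1) : StrictMono (v β) := fun n m hnm => by
  have : 0 < (1 - β) / β := div_pos (by linarith) hβ₀
  unfold v
  gcongr

section
variable {β : ℝ} (hβ : 0 < β)
include hβ

theorem one_add_succ_div_eq (k : ℕ) : (1 + ((k + 1 : ℕ) : ℝ)) / (1 + β) =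
    (1 + k) / (1 + β) * (1 + 1 / (k + 1)) := by
  have : (0 : ℝ) < 1 + β := by linarith
  push_cast
  field_simp
  ring

theorem v_succ_sub (k : ℕ) :
    v β (k + 1) - v β k =
      u β k * (k + 1) *
        ((1 + β) * ((1 / (k + 1)) ^ 2 * ((1 + 1 / (k + 1)) ^ (1 / β - 1) - 1))) := by
  have hx : (0 : ℝ) < (1 + k) / (1 + β) := by positivity
  have e : (1 - β) / β = 1 / β - 1 := by field_simp
  rw [v, v, one_add_succ_div_eq hβ, e, Real.mul_rpow hx.le (by positivity),
    Real.rpow_sub_one hx.ne', u]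
  field_simp
  ring

theorem emRemainder_succ_sub (k : ℕ) :
    emRemainder β (k + 1) - emRemainder β k =
      u β k * (k + 1) * correctedTrapezoidError (1 / β) (1 / (k + 1)) := by
  have hx : (0 : ℝ) < (1 + k) / (1 + β) := by positivity
  have e₁ : (1 + β) / β = 1 / β + 1 := by field_simp
  have e₂ : (1 - β) / β = 1 / β - 1 := by field_simp
  simp only [emRemainder, sumMinusIntegral, v, u, sum_range_succ, correctedTrapezoidError]
  rw [one_add_succ_div_eq hβ, e₁, e₂, Real.mul_rpow hx.le (by positivity),
    Real.mul_rpow hx.le (by positivity), Real.mul_rpow hx.le (by positivity),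
    Real.rpow_add_one hx.ne', Real.rpow_sub_one hx.ne']
  field_simp
  ring

end

theorem emRemainder_succ_sub_isLittleO {β : ℝ} (hβ₀ : 0 < β) (hβ₁ : β < 1) :
    (fun k => emRemainder β (k + 1) - emRemainder β k) =o[atTop]
      fun k => v β (k + 1) - v β k := by
  have hs₁ : 1 / β ≠ 1 := by
    rw [Ne, div_eq_one_iff_eq hβ₀.ne']
    exact hβ₁.ne'
  have hθ := ((correctedTrapezoidError_isLittleO (by positivity) hs₁).comp_tendsto
    tendsto_one_div_add_atTop_nhds_zero_nat).const_mul_right (c := 1 + β) (by positivity)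
  simp only [emRemainder_succ_sub hβ₀, v_succ_sub hβ₀]
  exact (isBigO_refl _ _).mul_isLittleO hθ

theorem alpha_asymptotics (β : ℝ) (hβ0 : 0 < β) (hβ1 : β < 1) :
    (∃ E : ℕ → ℕ → ℝ,
      (∀ n m : ℕ, alph β n m = (1 / 2) * (u β m - u β n) +
        (1 + E n m) / (12 * β * (1 + β)) *
          (((1 + m : ℝ) / (1 + β)) ^ ((1 - β) / β) -
            ((1 + n : ℝ) / (1 + β)) ^ ((1 - β) / β))) ∧
      Tendsto (fun p : ℕ × ℕ => E p.1 p.2) atTop (nhds 0)) ∧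
    ∃ c C : ℝ, 0 < c ∧ 0 < C ∧ ∀ n m : ℕ, n ≤ m →
      alph β n m ≥ c * |u β m - u β n| - C := by
  set κ := 12 * β * (1 + β)
  have hκ : 0 < κ := by positivity
  have hsplit : ∀ n m, alph β n m = 1 / 2 * (u β m - u β n) + κ⁻¹ * (v β m - v β n) +
      (emRemainder β m - emRemainder β n) := fun n m => by
    rw [alph_eq_sub, emRemainder, emRemainder]
    ring
  have hv := v_strictMono hβ0 hβ1
  have hg := emRemainder_succ_sub_isLittleO hβ0 hβ1
  refine ⟨⟨fun n m => κ * ((emRemainder β m - emRemainder β n) / (v β m - v β n)),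
    fun n m => ?_, by simpa using (tendsto_div_sub_of_isLittleO hv.monotone hg).const_mul κ⟩, ?_⟩
  · change _ = _ + _ / κ * (v β m - v β n)
    rcases eq_or_ne n m with rfl | hnm
    · -- here `E n n = κ * (0 / 0) = 0`
      simp [hsplit]
    · have : v β m - v β n ≠ 0 := sub_ne_zero.2 (hv.injective.ne hnm.symm)
      rw [hsplit]
      field_simp
      ring
  · obtain ⟨N, hN⟩ := exists_abs_sub_le_of_isLittleO hv.monotone hg (inv_pos.2 hκ)
    obtain ⟨C, hC, hH⟩ :=
      exists_le_add_of_monotoneOn_Ici (H := fun n => κ⁻¹ * v β n + emRemainder β n) (N := N)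
        fun n hn m _ hnm => by
          have := (abs_le.1 (hN n m hn hnm)).1
          dsimp only
          linarith
    refine ⟨1 / 2, C, one_half_pos, hC, fun n m hnm => ?_⟩
    rw [hsplit, abs_of_nonneg (sub_nonneg.2 (u_monotone hβ0 hnm))]
    linarith [hH n m hnm]
end
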